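/- Let 3/4 < α < 1 and set β = (4α − 3)/(2(1 − α)). Then for every δ > 0, every x ∈ [0,1] for which there are infinitely many rationals a/q with q odd and |x − a/q| ≤ q^{−(2+β)} belongs to O_{α−δ}; that is, J^odd_β ⊆ O_{α−δ}. -/

import Mathlib

open Real Set

/-- The quadratic Weyl sum `w_N(x,t) = Σ_{n=1}^N e^{2πi(nx + n²t)}`. -/
noncomputable def weylSum (N : ℕ) (x t : ℝ) : ℂ :=
  ∑ n ∈ Finset.Icc 1 N, Complex.exp (2 * Real.pi * Complex.I * (n * x + n ^ 2 * t))

/-!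
Write `x = a/q + θ` with `q` odd and `|θ| ≤ q^{-(2+β)}`. At time `t = 1/q` the phase of the
`n`-th term is `(an + n²)/q + nθ`, so for `N = Kq` the Weyl sum factors as
`(∑_{j<K} e(jqθ)) · (∑_{r=1}^{q} e((ar + r²)/q) e(rθ))`. For `K ≍ q^{1+β}` the perturbation by `θ`
costs at most half of each factor, and the complete quadratic Gauss sum modulo an odd `q` has
modulus exactly `√q`, so `|w_N(x, 1/q)| ≳ K√q ≍ q^{3/2+β}`. Since `N ≍ q^{2+β}` and
`(2+β)α = 3/2+β`, this is `N^α` up to a constant, which `N^{-δ}` absorbs once `q` is large.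
-/

open Finset Filter Complex ZMod AddChar
open scoped FourierTransform

theorem AddChar.sq_norm_sum_quadratic {R : Type*} [CommRing R] [Fintype R]
    {ψ : AddChar R ℂ} (hψ : ψ.IsPrimitive) (h2 : IsUnit (2 : R)) (a : R) :
    ‖∑ z, ψ (a * z + z ^ 2)‖ ^ 2 = Fintype.card R := by
  classical
  set f : R → R := fun z ↦ a * z + z ^ 2
  -- `f (h + n) - f n` is `f h` plus a term linear in `n`; summing over `n` kills every `h ≠ 0`
  have hshift (h n : R) : f (h + n) - f n = f h + n * (2 * h) := by simp only [f]; ring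
  have : (‖∑ z, ψ (f z)‖ ^ 2 : ℂ) = Fintype.card R := by
    calc (‖∑ z, ψ (f z)‖ ^ 2 : ℂ)
        = ∑ n, ∑ m, ψ (f m - f n) := by
          rw [← mul_conj', map_sum, sum_mul_sum, sum_comm]
          simp_rw [← map_neg_eq_conj, ← map_add_eq_mul, sub_eq_add_neg]
      _ = ∑ h, ψ (f h) * ∑ n, ψ (n * (2 * h)) := by
          simp_rw [mul_sum, ← map_add_eq_mul, ← hshift]
          conv_rhs => rw [sum_comm]
          exact sum_congr rfl fun n _ ↦
            (Fintype.sum_equiv (Equiv.addRight n) _ _ fun _ ↦ rfl).symm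
      _ = Fintype.card R := by
          simp_rw [sum_mulShift _ hψ, h2.mul_right_eq_zero]
          simp [f]
  exact_mod_cast this

theorem ZMod.norm_sum_stdAddChar_quadratic {q : ℕ} [NeZero q] (hq : Odd q) (a : ZMod q) :
    ‖∑ z : ZMod q, stdAddChar (a * z + z ^ 2)‖ = √q := by
  have h2 : IsUnit (2 : ZMod q) := by
    exact_mod_cast (ZMod.isUnit_iff_coprime 2 q).2 (Nat.coprime_two_left.2 hq)
  rw [eq_comm, sqrt_eq_iff_eq_sq (Nat.cast_nonneg _) (norm_nonneg _),
    sq_norm_sum_quadratic (isPrimitive_stdAddChar q) h2, ZMod.card]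

theorem norm_fourierChar_sub_one_le (s : ℝ) : ‖(𝐞 s : ℂ) - 1‖ ≤ 2 * π * |s| := by
  have := norm_exp_I_mul_ofReal_sub_one_le (x := 2 * π * s)
  rwa [mul_comm, ← fourierChar_apply, Real.norm_eq_abs, abs_mul, abs_of_pos two_pi_pos] at this

theorem fourierChar_intCast_div (q : ℕ) [NeZero q] (k : ℤ) :
    (𝐞 (k / q) : ℂ) = stdAddChar (k : ZMod q) := by
  rw [stdAddChar_coe, fourierChar_apply]
  push_cast
  ring_nf

theorem Finset.sum_range_mul {M : Type*} [AddCommMonoid M] (f : ℕ → M) (K q : ℕ) :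
    ∑ n ∈ range (K * q), f n = ∑ j ∈ range K, ∑ r ∈ range q, f (j * q + r) := by
  rw [← Fin.sum_univ_eq_sum_range, ← finProdFinEquiv.sum_comp, Fintype.sum_prod_type]
  simp_rw [finProdFinEquiv_apply_val, ← Fin.sum_univ_eq_sum_range]
  exact sum_congr rfl fun j _ ↦ sum_congr rfl fun r _ ↦ by rw [add_comm, mul_comm]

theorem ZMod.sum_range_natCast {M : Type*} [AddCommMonoid M] (q : ℕ) [NeZero q]
    (g : ZMod q → M) : ∑ r ∈ range q, g r = ∑ z : ZMod q, g z := by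
  refine sum_nbij' (fun r ↦ (r : ZMod q)) ZMod.val (by simp) (fun z _ ↦ by simp [ZMod.val_lt])
    (fun r hr ↦ ZMod.val_cast_of_lt (mem_range.1 hr)) (fun z _ ↦ natCast_zmod_val z) (fun _ _ ↦ rfl)

theorem norm_sum_range_stdAddChar_quadratic_succ {q : ℕ} [NeZero q] (hq : Odd q) (a : ZMod q) :
    ‖∑ r ∈ range q, stdAddChar (a * ((r + 1 : ℕ) : ZMod q) + ((r + 1 : ℕ) : ZMod q) ^ 2)‖ = √q := by
  have hshift : ∑ z : ZMod q, stdAddChar (a * (z + 1) + (z + 1) ^ 2) =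
      ∑ z : ZMod q, stdAddChar (a * z + z ^ 2) :=
    Equiv.sum_comp (Equiv.addRight (1 : ZMod q)) fun z ↦ stdAddChar (a * z + z ^ 2)
  push_cast
  rw [sum_range_natCast q fun z ↦ stdAddChar (a * (z + 1) + (z + 1) ^ 2), hshift]
  exact norm_sum_stdAddChar_quadratic hq a

theorem weylSum_eq_sum_fourierChar (N : ℕ) (x t : ℝ) :
    weylSum N x t = ∑ n ∈ Icc 1 N, (𝐞 (n * x + n ^ 2 * t) : ℂ) := by
  refine sum_congr rfl fun n _ ↦ ?_
  rw [fourierChar_apply]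
  push_cast
  ring_nf

theorem norm_weylSum_le (N : ℕ) (x t : ℝ) : ‖weylSum N x t‖ ≤ N := by
  rw [weylSum_eq_sum_fourierChar]
  refine (norm_sum_le _ _).trans ?_
  simp only [Circle.norm_coe, sum_const, Nat.card_Icc, add_tsub_cancel_right, nsmul_eq_mul,
    mul_one, le_refl]

theorem weylSum_intCast_div_add (q : ℕ) [NeZero q] (a : ℤ) (θ : ℝ) (N : ℕ) :
    weylSum N (a / q + θ) (1 / q) =
      ∑ n ∈ range N, stdAddChar ((a : ZMod q) * ((n + 1 : ℕ) : ZMod q) +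
        ((n + 1 : ℕ) : ZMod q) ^ 2) * (𝐞 ((n + 1) * θ) : ℂ) := by
  rw [weylSum_eq_sum_fourierChar, ← Finset.Ico_succ_right_eq_Icc, sum_Ico_eq_sum_range]
  refine sum_congr (by simp) fun n _ ↦ ?_
  have harg : ((1 + n : ℕ) : ℝ) * (a / q + θ) + ((1 + n : ℕ) : ℝ) ^ 2 * (1 / q)
      = ((a * (n + 1) + (n + 1) ^ 2 : ℤ) : ℝ) / q + (n + 1) * θ := by
    push_cast
    field_simp
    ring
  rw [harg, map_add_eq_mul, Circle.coe_mul, fourierChar_intCast_div]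
  push_cast
  rfl

theorem weylSum_mul_intCast_div_add (K q : ℕ) [NeZero q] (a : ℤ) (θ : ℝ) :
    weylSum (K * q) (a / q + θ) (1 / q) = (∑ j ∈ range K, (𝐞 (j * q * θ) : ℂ)) *
      ∑ r ∈ range q, stdAddChar ((a : ZMod q) * ((r + 1 : ℕ) : ZMod q) +
        ((r + 1 : ℕ) : ZMod q) ^ 2) * (𝐞 ((r + 1) * θ) : ℂ) := by
  rw [weylSum_intCast_div_add, sum_range_mul, sum_mul]
  refine sum_congr rfl fun j _ ↦ ?_
  rw [mul_sum]
  refine sum_congr rfl fun r _ ↦ ?_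
  have hper : ((j * q + r + 1 : ℕ) : ZMod q) = ((r + 1 : ℕ) : ZMod q) := by simp
  have hadd : (((j * q + r : ℕ) : ℝ) + 1) * θ = j * q * θ + (r + 1) * θ := by push_cast; ring
  rw [hper, hadd, 𝐞.map_add_eq_mul, Circle.coe_mul]
  ring

theorem norm_sum_sub_card_mul_le_norm_sum_mul {ι 𝕜 : Type*} [NormedRing 𝕜] (s : Finset ι)
    {f g : ι → 𝕜} {ε : ℝ} (hf : ∀ i ∈ s, ‖f i‖ ≤ 1) (hg : ∀ i ∈ s, ‖g i - 1‖ ≤ ε) :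
    ‖∑ i ∈ s, f i‖ - #s * ε ≤ ‖∑ i ∈ s, f i * g i‖ := by
  have hdiff : ‖∑ i ∈ s, f i - ∑ i ∈ s, f i * g i‖ ≤ #s * ε := by
    rw [← sum_sub_distrib, ← nsmul_eq_mul, ← sum_const]
    refine norm_sum_le_of_le s fun i hi ↦ ?_
    calc ‖f i - f i * g i‖ = ‖f i * (1 - g i)‖ := by rw [mul_sub, mul_one]
      _ ≤ ‖f i‖ * ‖g i - 1‖ := by rw [← norm_sub_rev]; exact norm_mul_le _ _
      _ ≤ 1 * ε := mul_le_mul (hf i hi) (hg i hi) (norm_nonneg _) zero_le_one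
      _ = ε := one_mul ε
  linarith [norm_sub_norm_le (∑ i ∈ s, f i : 𝕜) (∑ i ∈ s, f i * g i)]

theorem le_norm_weylSum_mul_intCast_div_add {q : ℕ} (hq : Odd q) (a : ℤ) {θ : ℝ} (K : ℕ)
    (hK : 4 * π * K * q * |θ| ≤ 1) (hθ : 4 * π * q ^ 2 * |θ| ≤ √q) :
    K * √q / 4 ≤ ‖weylSum (K * q) (a / q + θ) (1 / q)‖ := by
  have : NeZero q := ⟨hq.pos.ne'⟩
  rw [weylSum_mul_intCast_div_add, norm_mul]
  have hlong : (K : ℝ) / 2 ≤ ‖∑ j ∈ range K, (𝐞 (j * q * θ) : ℂ)‖ := by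
    have h := norm_sum_sub_card_mul_le_norm_sum_mul (range K) (f := fun _ ↦ (1 : ℂ))
      (g := fun j ↦ (𝐞 (j * q * θ) : ℂ)) (ε := 2 * π * (K * q * |θ|)) (by simp) fun j hj ↦ by
        refine (norm_fourierChar_sub_one_le _).trans ?_
        rw [abs_mul, abs_mul, Nat.abs_cast, Nat.abs_cast]
        gcongr
        exact (mem_range.1 hj).le
    simp only [sum_const, card_range, nsmul_eq_mul, mul_one, one_mul, Complex.norm_natCast] at h
    nlinarith [mul_le_mul_of_nonneg_left hK (Nat.cast_nonneg K : (0 : ℝ) ≤ K)]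
  have hshort : √q / 2 ≤ ‖∑ r ∈ range q, stdAddChar ((a : ZMod q) * ((r + 1 : ℕ) : ZMod q) +
      ((r + 1 : ℕ) : ZMod q) ^ 2) * (𝐞 ((r + 1) * θ) : ℂ)‖ := by
    have h := norm_sum_sub_card_mul_le_norm_sum_mul (range q)
      (f := fun r ↦ stdAddChar ((a : ZMod q) * ((r + 1 : ℕ) : ZMod q) + ((r + 1 : ℕ) : ZMod q) ^ 2))
      (g := fun r ↦ (𝐞 ((r + 1) * θ) : ℂ)) (ε := 2 * π * (q * |θ|))
      (fun _ _ ↦ (norm_apply _ _).le) fun r hr ↦ by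
        refine (norm_fourierChar_sub_one_le _).trans ?_
        rw [abs_mul, show ((r : ℝ) + 1) = (r + 1 : ℕ) by push_cast; ring, Nat.abs_cast]
        gcongr
        exact_mod_cast mem_range.1 hr
    rw [norm_sum_range_stdAddChar_quadratic_succ hq, card_range] at h
    nlinarith
  calc (K : ℝ) * √q / 4 = (K / 2) * (√q / 2) := by ring
    _ ≤ _ := mul_le_mul hlong hshort (by positivity) (norm_nonneg _)

theorem finite_setOf_den_le_abs_sub_le (x c : ℝ) (Q : ℕ) :
    {r : ℚ | r.den ≤ Q ∧ |x - r| ≤ c}.Finite := by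
  set A : ℤ := ⌈(|x| + c) * Q⌉
  refine (((Set.finite_Icc (-A) A).prod (Set.finite_Iic Q)).image
    fun p : ℤ × ℕ ↦ (p.1 / p.2 : ℚ)).subset fun r ⟨hden, hr⟩ ↦ ⟨(r.num, r.den), ?_, r.num_div_den⟩
  have hnum : |(r.num : ℝ)| = |(r : ℝ)| * r.den := by
    rw [Rat.cast_def, abs_div, Nat.abs_cast, div_mul_cancel₀ _ (by positivity)]
  have hbound : |(r.num : ℝ)| ≤ A := by
    calc |(r.num : ℝ)| ≤ (|x| + c) * Q := by
          rw [hnum]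
          gcongr
          · linarith [abs_nonneg x, abs_nonneg (x - r)]
          · linarith [abs_sub_abs_le_abs_sub (r : ℝ) x, abs_sub_comm (r : ℝ) x]
      _ ≤ A := Int.le_ceil _
  rw [← Int.cast_abs, Int.cast_le] at hbound
  exact ⟨abs_le.1 hbound, hden⟩

theorem Set.Infinite.exists_le_den {S : Set ℚ} (hS : S.Infinite) {x c : ℝ}
    (hc : ∀ r ∈ S, |x - r| ≤ c) (Q : ℕ) : ∃ r ∈ S, Q ≤ r.den := by
  by_contra! h
  exact hS ((finite_setOf_den_le_abs_sub_le x c Q).subset fun r hr ↦ ⟨(h r hr).le, hc r hr⟩)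

theorem le_iSup_norm_weylSum (N : ℕ) (x : ℝ) {t : ℝ} (ht : t ∈ Set.Ioo 0 1) :
    ‖weylSum N x t‖ ≤ ⨆ t ∈ Set.Ioo (0 : ℝ) 1, ‖weylSum N x t‖ := by
  have hbdd : BddAbove (Set.range fun t ↦ ⨆ _ : t ∈ Set.Ioo (0 : ℝ) 1, ‖weylSum N x t‖) :=
    ⟨N, forall_mem_range.2 fun t ↦ Real.iSup_le (fun _ ↦ norm_weylSum_le N x t) N.cast_nonneg⟩
  exact le_ciSup_of_le hbdd t (ciSup_pos (f := fun _ ↦ ‖weylSum N x t‖) ht).ge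

theorem rpow_sub_le_rpow_mul_div_rpow {q N α γ δ : ℝ} (hq : 0 < q) (hqN : q ≤ N)
    (hNq : N ≤ q ^ γ) (hα : 0 ≤ α) (hδ : 0 ≤ δ) : N ^ (α - δ) ≤ q ^ (γ * α) / q ^ δ := by
  have hN : 0 < N := hq.trans_le hqN
  rw [rpow_sub hN, rpow_mul hq.le]
  gcongr

theorem exists_le_norm_weylSum_of_abs_le {q : ℕ} (hq : Odd q) (a : ℤ) {θ β : ℝ}
    (hθ : |θ| ≤ (q : ℝ) ^ (-(2 + β))) (hlong : 4 * π ≤ (q : ℝ) ^ (1 + β))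
    (hshort : 4 * π ≤ (q : ℝ) ^ (1 / 2 + β)) :
    ∃ N : ℕ, q ≤ N ∧ (N : ℝ) ≤ (q : ℝ) ^ (2 + β) ∧
      (q : ℝ) ^ (3 / 2 + β) / (32 * π) ≤ ‖weylSum N (a / q + θ) (1 / q)‖ := by
  have hQ : (0 : ℝ) < q := Nat.cast_pos.2 hq.pos
  set X := (q : ℝ) ^ (1 + β) / (4 * π)
  have hX : 1 ≤ X := (one_le_div (by positivity)).2 hlong
  set K := ⌊X⌋₊
  have hKX : (K : ℝ) ≤ X := Nat.floor_le (by linarith)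
  have hK : 1 ≤ K := Nat.le_floor (by simpa using hX)
  have hXK : X / 2 ≤ K := by
    have : (1 : ℝ) ≤ K := by exact_mod_cast hK
    linarith [Nat.lt_floor_add_one X]
  have hX4 : 4 * π * X = (q : ℝ) ^ (1 + β) := mul_div_cancel₀ _ (by positivity)
  have hXq : 4 * π * X * q = (q : ℝ) ^ (2 + β) := by
    rw [show (2 : ℝ) + β = 1 + β + 1 by ring, rpow_add_one hQ.ne', hX4]
  refine ⟨K * q, Nat.le_mul_of_pos_left q hK, ?_, ?_⟩
  · push_cast
    calc (K : ℝ) * q ≤ 4 * π * X * q := by gcongr; nlinarith [pi_gt_three]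
      _ = (q : ℝ) ^ (2 + β) := hXq
  have hlong' : 4 * π * K * q * |θ| ≤ 1 :=
    calc 4 * π * K * q * |θ| ≤ 4 * π * X * q * (q : ℝ) ^ (-(2 + β)) := by gcongr
      _ = 1 := by rw [hXq, ← rpow_add hQ, add_neg_cancel, rpow_zero]
  have hshort' : 4 * π * q ^ 2 * |θ| ≤ √q :=
    calc 4 * π * q ^ 2 * |θ| ≤ 4 * π * ((q : ℝ) ^ (2 : ℝ) * (q : ℝ) ^ (-(2 + β))) := by
          rw [rpow_two, ← mul_assoc]; gcongr
      _ = 4 * π * (q : ℝ) ^ (-β) := by rw [← rpow_add hQ]; ring_nf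
      _ ≤ (q : ℝ) ^ (1 / 2 + β) * (q : ℝ) ^ (-β) := by gcongr
      _ = √q := by rw [← rpow_add hQ, sqrt_eq_rpow]; ring_nf
  calc (q : ℝ) ^ (3 / 2 + β) / (32 * π) = X / 2 * √q / 4 := by
        rw [sqrt_eq_rpow, show (3 / 2 : ℝ) + β = 1 + β + 1 / 2 by ring, rpow_add hQ, ← hX4]
        field_simp
        ring
    _ ≤ K * √q / 4 := by gcongr
    _ ≤ ‖weylSum (K * q) (a / q + θ) (1 / q)‖ :=
        le_norm_weylSum_mul_intCast_div_add hq a K hlong' hshort'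

theorem eventually_exists_rpow_le_iSup_norm_weylSum {α β δ : ℝ} (hα : 0 ≤ α)
    (hβ : 0 < 1 / 2 + β) (hαβ : (2 + β) * α = 3 / 2 + β) (hδ : 0 < δ) :
    ∀ᶠ q : ℕ in atTop, ∀ (a : ℤ) (θ : ℝ), Odd q → |θ| ≤ (q : ℝ) ^ (-(2 + β)) →
      ∃ N : ℕ, q ≤ N ∧ (N : ℝ) ^ (α - δ) ≤ ⨆ t ∈ Set.Ioo (0 : ℝ) 1, ‖weylSum N (a / q + θ) t‖ := by
  have hpow {c : ℝ} (hc : 0 < c) (C : ℝ) : ∀ᶠ q : ℕ in atTop, C ≤ (q : ℝ) ^ c :=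
    ((tendsto_rpow_atTop hc).comp tendsto_natCast_atTop_atTop).eventually_ge_atTop C
  filter_upwards [hpow (by linarith : 0 < 1 + β) (4 * π), hpow hβ (4 * π), hpow hδ (32 * π),
    eventually_ge_atTop 2] with q hlong hshort hδq hq2 a θ hodd hθ
  have hQ : (0 : ℝ) < q := by positivity
  obtain ⟨N, hqN, hNq, hN⟩ := exists_le_norm_weylSum_of_abs_le hodd a hθ hlong hshort
  refine ⟨N, hqN, ?_⟩
  calc (N : ℝ) ^ (α - δ) ≤ (q : ℝ) ^ ((2 + β) * α) / (q : ℝ) ^ δ :=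
        rpow_sub_le_rpow_mul_div_rpow hQ (by exact_mod_cast hqN) hNq hα hδ.le
    _ ≤ (q : ℝ) ^ (3 / 2 + β) / (32 * π) := by rw [hαβ]; gcongr
    _ ≤ ‖weylSum N (a / q + θ) (1 / q)‖ := hN
    _ ≤ _ := le_iSup_norm_weylSum N _
        ⟨by positivity, by rw [div_lt_one hQ]; exact_mod_cast hq2⟩

/-- with `β = (4α-3)/(2(1-α))`, every point of `[0,1]` which is
approximated to order `q^{-(2+β)}` by infinitely many rationals with odd
denominator lies in `O_{α-δ}` for every `δ > 0`; i.e. `J^odd_β ⊆ O_{α-δ}`. -/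
theorem jarnik_set_in_divergence_set (α : ℝ) (hα₁ : 3/4 < α) (hα₂ : α < 1)
    (β : ℝ) (hβ : β = (4 * α - 3) / (2 * (1 - α))) (δ : ℝ) (hδ : 0 < δ) :
    {x : ℝ | x ∈ Set.Icc (0:ℝ) 1 ∧
        {r : ℚ | Odd r.den ∧ |x - (r : ℝ)| ≤ (r.den : ℝ) ^ (-(2 + β))}.Infinite}
      ⊆ {x : ℝ | x ∈ Set.Icc (0:ℝ) 1 ∧
        {N : ℕ | (N : ℝ) ^ (α - δ) ≤ ⨆ t ∈ Set.Ioo (0:ℝ) 1,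
          ‖weylSum N x t‖}.Infinite} := by
  rintro x ⟨hx, hS⟩
  refine ⟨hx, ?_⟩
  have hβpos : 0 < β := hβ ▸ div_pos (by linarith) (by linarith)
  have hαβ : (2 + β) * α = 3 / 2 + β := by
    rw [hβ]
    field_simp [(by linarith : (1 : ℝ) - α ≠ 0)]
    ring
  obtain ⟨Q, hQ⟩ := eventually_atTop.1
    (eventually_exists_rpow_le_iSup_norm_weylSum (by linarith) (by linarith) hαβ hδ)
  have happrox (r : ℚ) (hr : r ∈ {r : ℚ | Odd r.den ∧ |x - r| ≤ (r.den : ℝ) ^ (-(2 + β))}) :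
      |x - r| ≤ 1 :=
    hr.2.trans (rpow_le_one_of_one_le_of_nonpos (by exact_mod_cast r.den_pos) (by linarith))
  refine Set.infinite_of_forall_exists_gt fun M ↦ ?_
  obtain ⟨r, ⟨hodd, hr⟩, hden⟩ := hS.exists_le_den happrox (max Q (M + 1))
  obtain ⟨N, hN, hNsup⟩ := hQ r.den (le_of_max_le_left hden) r.num (x - r) hodd hr
  refine ⟨N, ?_, by omega⟩
  rwa [← Rat.cast_def, add_sub_cancel] at hNsup
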